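/- arXiv:2306.06602 — 6 statements merged into one kernel-verified Lean document; each statement's English description precedes it below -/
import Mathlib

section
/- For a density matrix ρ and observables A, B (Hermitian matrices), the Wigner–Yanase skew informations satisfy I_ρ(A) I_ρ(B) ≥ (1/4)(∑_{s,t} |(Ã†)_{ts} (B̃)_{st}|)², where Ã = [√ρ, A] and B̃ = [√ρ, B]. -/
open Matrix BigOperators Finset ComplexOrder

noncomputable def WY {d : ℕ} (S K : Matrix (Fin d) (Fin d) ℂ) : ℝ :=
  (1/2 : ℝ) * ((S * K - K * S)ᴴ * (S * K - K * S)).trace.re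

lemma trace_conjTranspose_mul_re {d : ℕ} (M : Matrix (Fin d) (Fin d) ℂ) :
    ((Mᴴ * M).trace).re = ∑ s : Fin d, ∑ t : Fin d, ‖M s t‖ ^ 2 := by
  simp only [Matrix.trace, Matrix.diag, Matrix.mul_apply, Matrix.conjTranspose_apply]
  rw [Complex.re_sum]
  rw [Finset.sum_comm]
  congr 1
  ext s
  rw [Complex.re_sum]
  congr 1
  ext t
  simp [mul_comm, Complex.star_def, Complex.mul_conj, Complex.sq_norm]

theorem wy_product_bound_observables {d : ℕ}
    (ρ S A B : Matrix (Fin d) (Fin d) ℂ)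
    (hρ : ρ.PosSemidef) (htr : ρ.trace = 1)
    (hS : S.PosSemidef) (hS2 : S * S = ρ)
    (hA : A.IsHermitian) (hB : B.IsHermitian) :
    WY S A * WY S B ≥
      (1/4 : ℝ) * (∑ s, ∑ t,
        ‖(S * A - A * S)ᴴ t s * (S * B - B * S) s t‖) ^ 2 := by
  set M := S * A - A * S with hM
  set N := S * B - B * S with hN
  have hnorm : ∀ s t : Fin d, ‖Mᴴ t s * N s t‖ = ‖M s t‖ * ‖N s t‖ := by
    intro s t
    rw [norm_mul, Matrix.conjTranspose_apply, norm_star]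
  have key : (∑ s : Fin d, ∑ t : Fin d, ‖M s t‖ * ‖N s t‖) ^ 2 ≤
      (∑ s : Fin d, ∑ t : Fin d, ‖M s t‖ ^ 2) *
      (∑ s : Fin d, ∑ t : Fin d, ‖N s t‖ ^ 2) := by
    classical
    have h := Finset.sum_mul_sq_le_sq_mul_sq
      (Finset.univ : Finset (Fin d × Fin d))
      (fun p => ‖M p.1 p.2‖) (fun p => ‖N p.1 p.2‖)
    simpa [Fintype.sum_prod_type, mul_pow] using h
  have hM2 := trace_conjTranspose_mul_re M
  have hN2 := trace_conjTranspose_mul_re N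
  rw [WY, WY, ← hM, ← hN]
  have : (1/2 : ℝ) * (Mᴴ * M).trace.re * ((1/2 : ℝ) * (Nᴴ * N).trace.re)
      = (1/4 : ℝ) * ((Mᴴ * M).trace.re * (Nᴴ * N).trace.re) := by ring
  rw [this, hM2, hN2]
  have hsum : (∑ s, ∑ t, ‖Mᴴ t s * N s t‖) = ∑ s, ∑ t, ‖M s t‖ * ‖N s t‖ := by
    refine Finset.sum_congr rfl fun s _ => Finset.sum_congr rfl fun t _ => hnorm s t
  rw [ge_iff_le, hsum]
  nlinarith [key]
end

section
/- For a density matrix ρ and two quantum channels Ψ(ρ)=∑_{i=1}^n L_i ρ L_i† and Φ(ρ)=∑_{j=1}^n K_j ρ K_j†, the skew informations satisfy I_ρ(Ψ) I_ρ(Φ) ≥ (1/4) ∑_{i,j=1}^n ( ∑_{s,t=1}^d |(L̃_i†)_{ts} (K̃_j)_{st}| )², where L̃_i = [√ρ, L_i] and K̃_j = [√ρ, K_j]. -/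
open Matrix BigOperators Finset ComplexOrder

lemma star_mul_self_re' (z : ℂ) : (star z * z).re = ‖z‖^2 := by
  have : star z * z = (Complex.normSq z : ℂ) := by
    rw [mul_comm]; exact_mod_cast Complex.mul_conj z
  rw [this, Complex.ofReal_re, Complex.normSq_eq_norm_sq]

lemma trace_re_eq' {d : ℕ} (A : Matrix (Fin d) (Fin d) ℂ) :
    ((Aᴴ * A).trace).re = ∑ s, ∑ t, ‖A s t‖^2 := by
  rw [Matrix.trace]
  simp only [Matrix.diag, Matrix.mul_apply, Matrix.conjTranspose_apply]
  rw [Complex.re_sum, Finset.sum_comm]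
  refine Finset.sum_congr rfl fun s _ => ?_
  rw [Complex.re_sum]
  exact Finset.sum_congr rfl fun t _ => star_mul_self_re' _

theorem wy_product_bound_channels {d n : ℕ}
    (ρ S : Matrix (Fin d) (Fin d) ℂ)
    (hρ : ρ.PosSemidef) (htr : ρ.trace = 1)
    (hS : S.PosSemidef) (hS2 : S * S = ρ)
    (L K : Fin n → Matrix (Fin d) (Fin d) ℂ)
    (hL : ∑ i, (L i)ᴴ * L i = 1) (hK : ∑ j, (K j)ᴴ * K j = 1) :
    (∑ i, WY S (L i)) * (∑ j, WY S (K j)) ≥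
      (1/4 : ℝ) * ∑ i, ∑ j, (∑ s, ∑ t,
        ‖(S * L i - L i * S)ᴴ t s * (S * K j - K j * S) s t‖) ^ 2 := by
  set A : Fin n → ℝ := fun i => ∑ s, ∑ t, ‖(S * L i - L i * S) s t‖^2 with hA
  set B : Fin n → ℝ := fun j => ∑ s, ∑ t, ‖(S * K j - K j * S) s t‖^2 with hB
  have hWL : ∀ i, WY S (L i) = (1/2 : ℝ) * A i := fun i => by
    rw [WY, trace_re_eq']
  have hWK : ∀ j, WY S (K j) = (1/2 : ℝ) * B j := fun j => by
    rw [WY, trace_re_eq']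
  have key : ∀ i j, (∑ s, ∑ t,
      ‖(S * L i - L i * S)ᴴ t s * (S * K j - K j * S) s t‖) ^ 2 ≤ A i * B j := by
    intro i j
    have hrw : (∑ s, ∑ t, ‖(S * L i - L i * S)ᴴ t s * (S * K j - K j * S) s t‖)
        = ∑ p ∈ (Finset.univ ×ˢ Finset.univ : Finset (Fin d × Fin d)),
            ‖(S * L i - L i * S) p.1 p.2‖ * ‖(S * K j - K j * S) p.1 p.2‖ := by
      rw [Finset.sum_product]
      refine Finset.sum_congr rfl fun s _ => Finset.sum_congr rfl fun t _ => ?_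
      rw [norm_mul, Matrix.conjTranspose_apply, norm_star]
    have hA' : A i = ∑ p ∈ (Finset.univ ×ˢ Finset.univ : Finset (Fin d × Fin d)),
        ‖(S * L i - L i * S) p.1 p.2‖ ^ 2 := by rw [hA, Finset.sum_product]
    have hB' : B j = ∑ p ∈ (Finset.univ ×ˢ Finset.univ : Finset (Fin d × Fin d)),
        ‖(S * K j - K j * S) p.1 p.2‖ ^ 2 := by rw [hB, Finset.sum_product]
    rw [hrw, hA', hB']
    exact Finset.sum_mul_sq_le_sq_mul_sq _ _ _
  have hsum : ∑ i, ∑ j, (∑ s, ∑ t,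
      ‖(S * L i - L i * S)ᴴ t s * (S * K j - K j * S) s t‖) ^ 2
      ≤ (∑ i, A i) * (∑ j, B j) := by
    rw [Finset.sum_mul_sum]
    exact Finset.sum_le_sum fun i _ => Finset.sum_le_sum fun j _ => key i j
  calc (1/4 : ℝ) * ∑ i, ∑ j, (∑ s, ∑ t,
        ‖(S * L i - L i * S)ᴴ t s * (S * K j - K j * S) s t‖) ^ 2
      ≤ (1/4 : ℝ) * ((∑ i, A i) * (∑ j, B j)) := by
        apply mul_le_mul_of_nonneg_left hsum; norm_num
    _ = (∑ i, WY S (L i)) * (∑ j, WY S (K j)) := by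
        simp only [hWL, hWK, ← Finset.mul_sum]; ring
end

section
/- The skew information of a quantum channel is independent of the Kraus representation: if {K_i}_{i=1}^n and {M_j}_{j=1}^m are two Kraus representations of the same channel Φ, related by M_j = ∑_i u_{ji} K_i for an isometry (u_{ji}), then ∑_i I_ρ(K_i) = ∑_j I_ρ(M_j). -/
/-!
The commutator `[S, K]` is linear in `K`, so the commutators of the `M j` are the
`u`-combinations of those of the `K i`. Recombining a family of matrices by a matrix with
orthonormal columns preserves `∑ tr (Cᴴ C)`: after expanding, the cross terms carry the factor
`∑ⱼ conj (u j i) * u j i' = δ i i'`.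
-/

open Matrix BigOperators Finset ComplexOrder

theorem mul_sub_mul_sum_smul {R A ι : Type*} [CommRing R] [Ring A] [Algebra R A]
    (s : Finset ι) (a : A) (v : ι → R) (b : ι → A) :
    a * (∑ i ∈ s, v i • b i) - (∑ i ∈ s, v i • b i) * a = ∑ i ∈ s, v i • (a * b i - b i * a) := by
  simp only [Finset.mul_sum, Finset.sum_mul, mul_smul_comm, smul_mul_assoc, smul_sub,
    Finset.sum_sub_distrib]

namespace Matrix

variable {R ι κ p q : Type*} [CommRing R] [StarRing R] [Fintype ι] [Fintype p] [Fintype q]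

theorem trace_conjTranspose_sum_smul_mul_sum_smul (v : ι → R) (C : ι → Matrix p q R) :
    ((∑ i, v i • C i)ᴴ * ∑ i, v i • C i).trace
      = ∑ i, ∑ i', (star (v i) * v i') * ((C i)ᴴ * C i').trace := by
  simp only [conjTranspose_sum, conjTranspose_smul, Matrix.sum_mul, Matrix.mul_sum,
    Matrix.smul_mul, Matrix.mul_smul, trace_sum, trace_smul, smul_eq_mul, Finset.mul_sum]
  rw [Finset.sum_comm]
  exact Finset.sum_congr rfl fun _ _ => Finset.sum_congr rfl fun _ _ => by ring

theorem sum_trace_conjTranspose_mul_self_of_conjTranspose_mul_self_eq_one [DecidableEq ι]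
    [Fintype κ] (u : Matrix κ ι R) (hu : uᴴ * u = 1) (C : ι → Matrix p q R) :
    ∑ j, ((∑ i, u j i • C i)ᴴ * ∑ i, u j i • C i).trace = ∑ i, ((C i)ᴴ * C i).trace := by
  have hcol : ∀ i i', ∑ j, star (u j i) * u j i' = if i = i' then 1 else 0 := fun i i' => by
    simpa [mul_apply, one_apply] using congrFun (congrFun hu i) i'
  simp only [trace_conjTranspose_sum_smul_mul_sum_smul]
  rw [Finset.sum_comm]
  refine Finset.sum_congr rfl fun i _ => ?_
  rw [Finset.sum_comm]
  simp [← Finset.sum_mul, hcol]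

end Matrix

theorem wy_channel_kraus_independent_general {d n m : ℕ}
    (S : Matrix (Fin d) (Fin d) ℂ)
    (K : Fin n → Matrix (Fin d) (Fin d) ℂ)
    (M : Fin m → Matrix (Fin d) (Fin d) ℂ)
    (u : Matrix (Fin m) (Fin n) ℂ)
    (hiso : uᴴ * u = 1)
    (hM : ∀ j, M j = ∑ i, u j i • K i) :
    ∑ i, WY S (K i) = ∑ j, WY S (M j) := by
  simp only [WY, ← Finset.mul_sum, ← Complex.re_sum, hM, mul_sub_mul_sum_smul,
    sum_trace_conjTranspose_mul_self_of_conjTranspose_mul_self_eq_one u hiso]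

theorem wy_channel_kraus_independent {d n m : ℕ}
    (ρ S : Matrix (Fin d) (Fin d) ℂ)
    (hρ : ρ.PosSemidef) (htr : ρ.trace = 1)
    (hS : S.PosSemidef) (hS2 : S * S = ρ)
    (K : Fin n → Matrix (Fin d) (Fin d) ℂ)
    (M : Fin m → Matrix (Fin d) (Fin d) ℂ)
    (u : Matrix (Fin m) (Fin n) ℂ)
    (hiso : uᴴ * u = 1)
    (hM : ∀ j, M j = ∑ i, u j i • K i) :
    ∑ i, WY S (K i) = ∑ j, WY S (M j) :=
  wy_channel_kraus_independent_general S K M u hiso hM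
end

section
/- For any density matrix ρ and two unitary matrices U, V, the product of skew informations satisfies I_ρ(U) I_ρ(V) ≥ (1/4)( ∑_{s,t=1}^d |(Ũ†)_{ts}(Ṽ)_{st}| )², where Ũ = [√ρ, U] and Ṽ = [√ρ, V]. -/
open Matrix BigOperators Finset ComplexOrder

lemma WY_eq {d : ℕ} (S K : Matrix (Fin d) (Fin d) ℂ) :
    WY S K = (1/2 : ℝ) * ∑ p : Fin d × Fin d, ‖(S * K - K * S) p.1 p.2‖ ^ 2 := by
  set A := S * K - K * S
  have h1 : (Aᴴ * A).trace = ∑ t, ∑ s, (starRingEnd ℂ) (A s t) * A s t := by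
    simp [Matrix.trace, Matrix.mul_apply, Matrix.diag, Matrix.conjTranspose_apply]
  rw [WY, h1, Complex.re_sum]
  have h2 : ∀ t, (∑ s, (starRingEnd ℂ) (A s t) * A s t).re = ∑ s, ‖A s t‖ ^ 2 := by
    intro t
    rw [Complex.re_sum]
    refine Finset.sum_congr rfl fun s _ => ?_
    rw [mul_comm, Complex.mul_conj]
    simp [Complex.sq_norm]
  simp_rw [h2]
  rw [Fintype.sum_prod_type]
  congr 1
  exact Finset.sum_comm ..


theorem wy_product_bound_unitaries {d : ℕ}
    (ρ S U V : Matrix (Fin d) (Fin d) ℂ)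
    (hρ : ρ.PosSemidef) (htr : ρ.trace = 1)
    (hS : S.PosSemidef) (hS2 : S * S = ρ)
    (hU : U ∈ Matrix.unitaryGroup (Fin d) ℂ)
    (hV : V ∈ Matrix.unitaryGroup (Fin d) ℂ) :
    WY S U * WY S V ≥
      (1/4 : ℝ) * (∑ s, ∑ t,
        ‖(S * U - U * S)ᴴ t s * (S * V - V * S) s t‖) ^ 2 := by
  set A := S * U - U * S
  set B := S * V - V * S
  have hsum : (∑ s, ∑ t, ‖Aᴴ t s * B s t‖)
      = ∑ p : Fin d × Fin d, ‖A p.1 p.2‖ * ‖B p.1 p.2‖ := by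
    rw [← Finset.sum_product']
    refine Finset.sum_congr rfl fun p _ => ?_
    simp [Matrix.conjTranspose_apply, norm_mul]
  have hCS := Finset.sum_mul_sq_le_sq_mul_sq Finset.univ
    (fun p : Fin d × Fin d => ‖A p.1 p.2‖) (fun p => ‖B p.1 p.2‖)
  rw [WY_eq, WY_eq, hsum, ge_iff_le]
  calc (1/4 : ℝ) * (∑ p : Fin d × Fin d, ‖A p.1 p.2‖ * ‖B p.1 p.2‖) ^ 2
      ≤ (1/4 : ℝ) * ((∑ p : Fin d × Fin d, ‖A p.1 p.2‖ ^ 2) *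
          ∑ p : Fin d × Fin d, ‖B p.1 p.2‖ ^ 2) := by
        apply mul_le_mul_of_nonneg_left hCS (by norm_num)
    _ = (1/2 : ℝ) * (∑ p : Fin d × Fin d, ‖A p.1 p.2‖ ^ 2) *
        ((1/2 : ℝ) * ∑ p : Fin d × Fin d, ‖B p.1 p.2‖ ^ 2) := by ring
end

section
/- For a density matrix ρ and two channels Ψ(ρ)=∑_i L_i ρ L_i†, Φ(ρ)=∑_j K_j ρ K_j†, the product bound with sorted vectorizations holds: I_ρ(Ψ) I_ρ(Φ) ≥ (1/4) ∑_{i,j} ( ∑_{k=1}^{d²} a^{(i)}_k b^{(j)}_k )², where (a^{(i)}_k) is the non-increasing rearrangement of the absolute values of the entries of [√ρ,L_i] and (b^{(j)}_k) that of [√ρ,K_j]. -/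
set_option maxHeartbeats 1000000


open Matrix BigOperators Finset ComplexOrder

lemma trace_conjT_mul_re {d : ℕ} (C : Matrix (Fin d) (Fin d) ℂ) :
    ((Cᴴ * C).trace).re = ∑ p, ∑ q, ‖C p q‖ ^ 2 := by
  simp only [Matrix.trace, Matrix.diag, Matrix.mul_apply, Matrix.conjTranspose_apply]
  rw [Complex.re_sum]
  rw [Finset.sum_comm]
  congr 1
  ext p
  rw [Complex.re_sum]
  congr 1
  ext q
  rw [show star (C q p) = starRingEnd ℂ (C q p) from rfl, mul_comm, Complex.mul_conj]
  simp only [Complex.normSq_eq_norm_sq]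
  norm_cast

theorem wy_product_bound_sorted {d n : ℕ}
    (ρ S : Matrix (Fin d) (Fin d) ℂ)
    (hρ : ρ.PosSemidef) (htr : ρ.trace = 1)
    (hS : S.PosSemidef) (hS2 : S * S = ρ)
    (L K : Fin n → Matrix (Fin d) (Fin d) ℂ)
    (hL : ∑ i, (L i)ᴴ * L i = 1) (hK : ∑ j, (K j)ᴴ * K j = 1)
    (a b : Fin n → Fin (d * d) → ℝ)
    (ha : ∀ i, Antitone (a i)) (hb : ∀ j, Antitone (b j))
    (hae : ∀ i, ∃ e : Fin (d * d) ≃ Fin d × Fin d,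
      ∀ k, a i k = ‖(S * L i - L i * S) (e k).1 (e k).2‖)
    (hbe : ∀ j, ∃ e : Fin (d * d) ≃ Fin d × Fin d,
      ∀ k, b j k = ‖(S * K j - K j * S) (e k).1 (e k).2‖) :
    (∑ i, WY S (L i)) * (∑ j, WY S (K j)) ≥
      (1/4 : ℝ) * ∑ i, ∑ j, (∑ k, a i k * b j k) ^ 2 := by
  have hWL : ∀ i, WY S (L i) = (1/2 : ℝ) * ∑ k, a i k ^ 2 := by
    intro i
    obtain ⟨e, he⟩ := hae i
    unfold WY
    rw [trace_conjT_mul_re]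
    congr 1
    calc ∑ p, ∑ q, ‖(S * L i - L i * S) p q‖ ^ 2
        = ∑ x : Fin d × Fin d, ‖(S * L i - L i * S) x.1 x.2‖ ^ 2 :=
          (Fintype.sum_prod_type
            (f := fun x : Fin d × Fin d => ‖(S * L i - L i * S) x.1 x.2‖ ^ 2)).symm
      _ = ∑ k, ‖(S * L i - L i * S) (e k).1 (e k).2‖ ^ 2 :=
          (Equiv.sum_comp e _).symm
      _ = ∑ k, a i k ^ 2 := Finset.sum_congr rfl fun k _ => by rw [he k]
  have hWK : ∀ j, WY S (K j) = (1/2 : ℝ) * ∑ k, b j k ^ 2 := by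
    intro j
    obtain ⟨e, he⟩ := hbe j
    unfold WY
    rw [trace_conjT_mul_re]
    congr 1
    calc ∑ p, ∑ q, ‖(S * K j - K j * S) p q‖ ^ 2
        = ∑ x : Fin d × Fin d, ‖(S * K j - K j * S) x.1 x.2‖ ^ 2 :=
          (Fintype.sum_prod_type
            (f := fun x : Fin d × Fin d => ‖(S * K j - K j * S) x.1 x.2‖ ^ 2)).symm
      _ = ∑ k, ‖(S * K j - K j * S) (e k).1 (e k).2‖ ^ 2 :=
          (Equiv.sum_comp e _).symm
      _ = ∑ k, b j k ^ 2 := Finset.sum_congr rfl fun k _ => by rw [he k]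
  have key : ∀ i j, (∑ k, a i k * b j k) ^ 2 ≤ (∑ k, a i k ^ 2) * (∑ k, b j k ^ 2) :=
    fun i j => Finset.sum_mul_sq_le_sq_mul_sq Finset.univ (a i) (b j)
  calc (∑ i, WY S (L i)) * (∑ j, WY S (K j))
      = (1/4 : ℝ) * ∑ i, ∑ j, (∑ k, a i k ^ 2) * (∑ k, b j k ^ 2) := by
        simp only [hWL, hWK, ← Finset.mul_sum]
        rw [show ((1:ℝ)/2 * ∑ i, ∑ k, a i k ^ 2) * ((1:ℝ)/2 * ∑ j, ∑ k, b j k ^ 2)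
            = 1/4 * ((∑ i, ∑ k, a i k ^ 2) * (∑ j, ∑ k, b j k ^ 2)) by ring,
          Finset.sum_mul_sum]
        simp only [Finset.mul_sum]
    _ ≥ (1/4 : ℝ) * ∑ i, ∑ j, (∑ k, a i k * b j k) ^ 2 := by
        apply mul_le_mul_of_nonneg_left _ (by norm_num)
        exact Finset.sum_le_sum fun i _ => Finset.sum_le_sum fun j _ => key i j
end

section
/- The sum-form lower bound of Fu et al. holds: for channels Ψ(ρ)=∑_{i=1}^n L_i ρ L_i† and Φ(ρ)=∑_{i=1}^n K_i ρ K_i† and any permutation π of {1,…,n}, I_ρ(Ψ) + I_ρ(Φ) ≥ (1/2) ∑_{i=1}^n I_ρ(L_i + K_{π(i)}), and likewise with minus signs. -/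
open Matrix BigOperators Finset ComplexOrder

/-! `WY S` is half the squared Frobenius norm of the commutator with `S`, so it is a nonnegative
quadratic form and satisfies the parallelogram law
`WY S (L + K) + WY S (L - K) = 2 WY S L + 2 WY S K`. Summed over the pairs `(L i, K (π i))`, and
since the `K (π i)` run over all the `K i`, the two sums on the right-hand sides add up to twice
the left-hand side; as both are nonnegative, each is at most twice the left-hand side. -/

namespace Matrix

theorem conjTranspose_mul_self_add_add_sub {m n R : Type*} [Fintype m] [NonUnitalRing R]
    [StarRing R] (A B : Matrix m n R) :
    (A + B)ᴴ * (A + B) + (A - B)ᴴ * (A - B) = 2 • (Aᴴ * A + Bᴴ * B) := by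
  simp only [conjTranspose_add, conjTranspose_sub, Matrix.add_mul, Matrix.mul_add, Matrix.sub_mul,
    Matrix.mul_sub, two_smul]
  abel

variable {m n : Type*} [Fintype m] [Fintype n]

theorem re_trace_conjTranspose_mul_self_add_add_sub (A B : Matrix m n ℂ) :
    ((A + B)ᴴ * (A + B)).trace.re + ((A - B)ᴴ * (A - B)).trace.re =
      2 * (Aᴴ * A).trace.re + 2 * (Bᴴ * B).trace.re := by
  rw [← Complex.add_re, ← trace_add, conjTranspose_mul_self_add_add_sub, trace_smul, trace_add,
    Complex.smul_re, Complex.add_re, smul_add, nsmul_eq_mul, nsmul_eq_mul, Nat.cast_ofNat]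

theorem re_trace_conjTranspose_mul_self_nonneg (A : Matrix m n ℂ) : 0 ≤ (Aᴴ * A).trace.re :=
  (Complex.nonneg_iff.mp (posSemidef_conjTranspose_mul_self A).trace_nonneg).1

end Matrix

section WY

variable {d : ℕ}

theorem WY_nonneg (S K : Matrix (Fin d) (Fin d) ℂ) : 0 ≤ WY S K :=
  mul_nonneg (by norm_num) (re_trace_conjTranspose_mul_self_nonneg _)

theorem WY_add_add_WY_sub (S L K : Matrix (Fin d) (Fin d) ℂ) :
    WY S (L + K) + WY S (L - K) = 2 * WY S L + 2 * WY S K := by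
  have hadd : S * (L + K) - (L + K) * S = (S * L - L * S) + (S * K - K * S) := by noncomm_ring
  have hsub : S * (L - K) - (L - K) * S = (S * L - L * S) - (S * K - K * S) := by noncomm_ring
  have h := re_trace_conjTranspose_mul_self_add_add_sub (S * L - L * S) (S * K - K * S)
  rw [WY, WY, WY, WY, hadd, hsub]
  linarith

theorem sum_WY_add_add_sum_WY_sub {ι : Type*} [Fintype ι] (S : Matrix (Fin d) (Fin d) ℂ)
    (L K : ι → Matrix (Fin d) (Fin d) ℂ) (σ : Equiv.Perm ι) :
    ∑ i, WY S (L i + K (σ i)) + ∑ i, WY S (L i - K (σ i)) =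
      2 * (∑ i, WY S (L i) + ∑ i, WY S (K i)) := by
  rw [← sum_add_distrib, ← Equiv.sum_comp σ (fun i => WY S (K i)), mul_add, mul_sum, mul_sum,
    ← sum_add_distrib]
  exact sum_congr rfl fun i _ => WY_add_add_WY_sub S (L i) (K (σ i))

end WY

theorem wy_sum_bound_fu_general {d n : ℕ}
    (S : Matrix (Fin d) (Fin d) ℂ)
    (L K : Fin n → Matrix (Fin d) (Fin d) ℂ)
    (π : Equiv.Perm (Fin n)) :
    ((∑ i, WY S (L i)) + (∑ i, WY S (K i)) ≥
      (1/2 : ℝ) * ∑ i, WY S (L i + K (π i)))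
    ∧ ((∑ i, WY S (L i)) + (∑ i, WY S (K i)) ≥
      (1/2 : ℝ) * ∑ i, WY S (L i - K (π i))) := by
  have hsum := sum_WY_add_add_sum_WY_sub S L K π
  have hadd : 0 ≤ ∑ i, WY S (L i + K (π i)) := sum_nonneg fun i _ => WY_nonneg _ _
  have hsub : 0 ≤ ∑ i, WY S (L i - K (π i)) := sum_nonneg fun i _ => WY_nonneg _ _
  constructor <;> linarith

theorem wy_sum_bound_fu {d n : ℕ}
    (ρ S : Matrix (Fin d) (Fin d) ℂ)
    (hρ : ρ.PosSemidef) (htr : ρ.trace = 1)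
    (hS : S.PosSemidef) (hS2 : S * S = ρ)
    (L K : Fin n → Matrix (Fin d) (Fin d) ℂ)
    (hL : ∑ i, (L i)ᴴ * L i = 1) (hK : ∑ i, (K i)ᴴ * K i = 1)
    (π : Equiv.Perm (Fin n)) :
    ((∑ i, WY S (L i)) + (∑ i, WY S (K i)) ≥
      (1/2 : ℝ) * ∑ i, WY S (L i + K (π i)))
    ∧ ((∑ i, WY S (L i)) + (∑ i, WY S (K i)) ≥
      (1/2 : ℝ) * ∑ i, WY S (L i - K (π i))) :=
  wy_sum_bound_fu_general S L K π
end
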